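/- arXiv:2203.06868 — 3 statements merged into one kernel-verified Lean document; each statement's English description precedes it below -/
import Mathlib

section
/- Let G be a topological group with a normal series 1 = G₀ ⊴ G₁ ⊴ ⋯ ⊴ Gₙ = G of closed subgroups whose factors G_{i+1}/G_i are each either cyclic or compact. Then any refinement of this series by closed normal subgroups has the same number of infinite cyclic (non-compact cyclic) factors as the original series. -/
open scoped Pointwise

section HirschDefs

variable {G : Type*} [Group G] [TopologicalSpace G]

/-- A finite normal series of closed subgroups of a topological group: it starts at the
trivial subgroup, ends at the whole group, consists of closed subgroups, and each term is
normal in the next. -/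
structure IsClosedSeries {n : ℕ} (c : Fin (n + 1) → Subgroup G) : Prop where
  bot : c 0 = ⊥
  top : c (Fin.last n) = ⊤
  closed : ∀ i, IsClosed ((c i : Set G))
  le : ∀ i : Fin n, c i.castSucc ≤ c i.succ
  normal : ∀ i : Fin n, ((c i.castSucc).subgroupOf (c i.succ)).Normal

/-- The `i`-th factor of the series is infinite cyclic: topologically isomorphic to the
discrete group `ℤ` (discrete topology together with an abstract isomorphism to `ℤ`). -/
def IsZFactor {n : ℕ} (c : Fin (n + 1) → Subgroup G) (i : Fin n) : Prop :=
  ∃ h : ((c i.castSucc).subgroupOf (c i.succ)).Normal,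
    haveI := h
    DiscreteTopology (↥(c i.succ) ⧸ (c i.castSucc).subgroupOf (c i.succ)) ∧
      Nonempty ((↥(c i.succ) ⧸ (c i.castSucc).subgroupOf (c i.succ)) ≃* Multiplicative ℤ)

/-- The number of infinite cyclic factors of a series. -/
noncomputable def zCount {n : ℕ} (c : Fin (n + 1) → Subgroup G) : ℕ :=
  Nat.card {i : Fin n // IsZFactor c i}

end HirschDefs

/-- The (topological) Hirsch length of a topological group: the supremum, over all finite
normal series of closed subgroups, of the number of infinite cyclic factors. -/
noncomputable def hirschLength (G : Type*) [Group G] [TopologicalSpace G] : ℕ∞ :=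
  ⨆ (n : ℕ) (c : Fin (n + 1) → Subgroup G) (_ : IsClosedSeries c), (zCount c : ℕ∞)

/-- The `i`-th factor of the series is cyclic (as an abstract group). -/
def IsCyclicFactor {G : Type*} [Group G] [TopologicalSpace G]
    {n : ℕ} (c : Fin (n + 1) → Subgroup G) (i : Fin n) : Prop :=
  ∃ h : ((c i.castSucc).subgroupOf (c i.succ)).Normal,
    haveI := h
    IsCyclic (↥(c i.succ) ⧸ (c i.castSucc).subgroupOf (c i.succ))

/-- The `i`-th factor of the series is compact. -/
def IsCompactFactor {G : Type*} [Group G] [TopologicalSpace G]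
    {n : ℕ} (c : Fin (n + 1) → Subgroup G) (i : Fin n) : Prop :=
  CompactSpace (↥(c i.succ) ⧸ (c i.castSucc).subgroupOf (c i.succ))

/-!
Every infinite cyclic factor `B/A` of the refinement lies inside a factor `L/K` of the original
series (`K ≤ A ≤ B ≤ L`). If `L/K` is compact, then so is its closed subgroup `B/K`, and its
discrete quotient `B/A` would be finite. So `L/K` is cyclic, hence infinite; a nontrivial `A/K`
would have finite index in `L/K`, making `B/A` finite, so `A = K`. Then `B/K` has finite index
in `L/K`, so `B` is closed of finite index, hence open, in `L`, and `L/K` is discrete like `B/K`: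
it is a `ℤ`-factor. Two `ℤ`-factors of the refinement in the same factor `L/K` would both start
at `K`, which is impossible; conversely if `L/K ≅ ℤ`, the first term `B` of the refinement not
contained in `K` gives a nontrivial subgroup `B/K` of `ℤ`, a `ℤ`-factor of the refinement.
-/

theorem IsCyclic.index_ne_zero_of_ne_bot {G : Type*} [Group G] [IsCyclic G] {H : Subgroup G}
    (hH : H ≠ ⊥) : H.index ≠ 0 := by
  obtain ⟨g, hg⟩ := IsCyclic.exists_generator (α := G)
  obtain ⟨⟨x, hx⟩, hx1⟩ := Subgroup.ne_bot_iff_exists_ne_one.mp hH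
  obtain ⟨k, rfl⟩ := Subgroup.mem_zpowers_iff.mp (hg x)
  have hgen : ∀ q : G ⧸ H, q ∈ Subgroup.zpowers (g : G ⧸ H) := by
    rintro ⟨x⟩
    obtain ⟨j, rfl⟩ := Subgroup.mem_zpowers_iff.mp (hg x)
    exact ⟨j, (QuotientGroup.mk_zpow H g j).symm⟩
  have hfin : IsOfFinOrder (g : G ⧸ H) := by
    refine isOfFinOrder_iff_zpow_eq_one.mpr ⟨k, fun hk0 => hx1 ?_, ?_⟩
    · simp [hk0]
    · rw [← QuotientGroup.mk_zpow H, QuotientGroup.eq_one_iff]; exact hx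
  rw [Subgroup.index_eq_card, ← orderOf_eq_card_of_forall_mem_zpowers hgen]
  exact hfin.orderOf_pos.ne'

namespace Subgroup

variable {G : Type*} [Group G]

theorem eq_of_relIndex_eq_zero_of_isCyclic {K A B : Subgroup G} [K.Normal] [IsCyclic (G ⧸ K)]
    (hKA : K ≤ A) (hAB : A ≤ B) (h : A.relIndex B = 0) :
    A = K ∧ B.FiniteIndex ∧ Infinite (G ⧸ K) := by
  set f := QuotientGroup.mk' K
  have hidx : (A.map f).index = 0 := by
    have := relIndex_dvd_index_of_le (map_mono (f := f) hAB)
    rw [relIndex_map_map, QuotientGroup.ker_mk', sup_eq_left.mpr hKA,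
      sup_eq_left.mpr (hKA.trans hAB), h] at this
    exact Nat.eq_zero_of_zero_dvd this
  have hAK : A ≤ K := by
    rw [← QuotientGroup.ker_mk' K, ← map_eq_bot_iff]
    by_contra hne
    exact IsCyclic.index_ne_zero_of_ne_bot hne hidx
  have hBK : ¬ B ≤ K := fun hBK => zero_ne_one (h ▸ relIndex_eq_one.mpr (hBK.trans hKA))
  refine ⟨le_antisymm hAK hKA, ⟨?_⟩, ?_⟩
  · rw [← sup_eq_left.mpr (hKA.trans hAB), ← QuotientGroup.ker_mk' K, ← comap_map_eq,
      index_comap_of_surjective _ (QuotientGroup.mk'_surjective K)]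
    refine IsCyclic.index_ne_zero_of_ne_bot fun hB => hBK ?_
    rwa [map_eq_bot_iff, QuotientGroup.ker_mk'] at hB
  · by_contra hfin
    rw [not_infinite_iff_finite] at hfin
    exact index_ne_zero_of_finite hidx

theorem normal_subgroupOf_of_le {K B L : Subgroup G} [hK : (K.subgroupOf L).Normal]
    (hBL : B ≤ L) : (K.subgroupOf B).Normal :=
  hK.comap (inclusion hBL)

theorem nonempty_quotient_subgroupOf_mulEquiv_int {K B L : Subgroup G} (hBL : B ≤ L)
    [(K.subgroupOf L).Normal] [(K.subgroupOf B).Normal] [IsCyclic (L ⧸ K.subgroupOf L)]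
    [Infinite (L ⧸ K.subgroupOf L)] (hB : ¬ B ≤ K) :
    Nonempty ((B ⧸ K.subgroupOf B) ≃* Multiplicative ℤ) := by
  set ρ := (QuotientGroup.mk' (K.subgroupOf L)).comp (inclusion hBL)
  have hker : ρ.ker = K.subgroupOf B := by
    ext b
    simp [ρ, QuotientGroup.eq_one_iff, mem_subgroupOf]
  have hne : ρ.range ≠ ⊥ := fun h => hB <| subgroupOf_eq_top.mp <|
    hker ▸ MonoidHom.ker_eq_top_iff.mpr (MonoidHom.range_eq_bot_iff.mp h)
  have : Infinite ρ.range := by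
    have hcard := ρ.range.card_mul_index
    rw [Nat.card_eq_zero_of_infinite (α := L ⧸ K.subgroupOf L), mul_eq_zero] at hcard
    exact (Nat.card_eq_zero.mp (hcard.resolve_right (IsCyclic.index_ne_zero_of_ne_bot hne))
      ).resolve_left (not_isEmpty_of_nonempty _)
  exact ⟨(QuotientGroup.quotientMulEquivOfEq hker.symm).trans
    ((QuotientGroup.quotientKerEquivRange ρ).trans intCyclicMulEquiv.symm)⟩

section Topology

variable [TopologicalSpace G]

theorem isOpen_subgroupOf_of_le {K B L : Subgroup G} (hBL : B ≤ L)
    (hK : IsOpen (K.subgroupOf L : Set L)) : IsOpen (K.subgroupOf B : Set B) :=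
  hK.preimage (continuous_inclusion hBL)

theorem isClosed_map_mk' {K B : Subgroup G} [K.Normal] (hKB : K ≤ B)
    (hB : IsClosed (B : Set G)) : IsClosed (B.map (QuotientGroup.mk' K) : Set (G ⧸ K)) := by
  rw [← (QuotientGroup.isQuotientMap_mk K).isClosed_preimage]
  change IsClosed ((B.map (QuotientGroup.mk' K)).comap (QuotientGroup.mk' K) : Set G)
  rwa [comap_map_eq, QuotientGroup.ker_mk', sup_eq_left.mpr hKB]

variable [IsTopologicalGroup G]

theorem isOpen_subgroupOf_of_finiteIndex {K B L : Subgroup G} (hKB : K ≤ B)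
    (hB : IsClosed (B : Set G)) [(B.subgroupOf L).FiniteIndex]
    (hK : IsOpen (K.subgroupOf B : Set B)) : IsOpen (K.subgroupOf L : Set L) := by
  have hBo : IsOpen (B.subgroupOf L : Set L) :=
    isOpen_of_isClosed_of_finiteIndex _ (hB.preimage continuous_subtype_val)
  obtain ⟨U, hU, hUK⟩ := isOpen_induced_iff.mp hK
  have : (K.subgroupOf L : Set L) = (B.subgroupOf L : Set L) ∩ Subtype.val ⁻¹' U := by
    ext x
    refine ⟨fun hx => ⟨hKB hx, ?_⟩, fun ⟨hxB, hxU⟩ => ?_⟩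
    · exact (Set.ext_iff.mp hUK ⟨x, hKB hx⟩).mpr hx
    · exact (Set.ext_iff.mp hUK ⟨x, hxB⟩).mp hxU
  rw [this]
  exact hBo.inter (hU.preimage continuous_subtype_val)

theorem isOpen_map_mk'_subgroupOf {K A B L : Subgroup G} [(K.subgroupOf L).Normal] (hKA : K ≤ A)
    (hAB : A ≤ B) (hA : IsOpen (A.subgroupOf B : Set B)) :
    IsOpen (((A.subgroupOf L).map (QuotientGroup.mk' _)).subgroupOf
      ((B.subgroupOf L).map (QuotientGroup.mk' (K.subgroupOf L))) :
        Set ((B.subgroupOf L).map (QuotientGroup.mk' (K.subgroupOf L)))) := by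
  obtain ⟨U, hU, hUA⟩ := isOpen_induced_iff.mp hA
  refine isOpen_induced_iff.mpr ⟨QuotientGroup.mk '' (Subtype.val ⁻¹' U : Set L),
    QuotientGroup.isOpenMap_coe _ (hU.preimage continuous_subtype_val), ?_⟩
  ext ⟨t, ht⟩
  simp only [Set.mem_preimage, SetLike.mem_coe, mem_subgroupOf, Set.mem_image]
  constructor
  · rintro ⟨u, huU, rfl⟩
    obtain ⟨b, hb, hbu⟩ := mem_map.mp ht
    have huB : (u : G) ∈ B := by
      have hK : b⁻¹ * u ∈ K.subgroupOf L := QuotientGroup.eq.mp hbu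
      simpa [mem_subgroupOf] using mul_mem hb (hKA.trans hAB hK)
    exact mem_map_of_mem _ ((Set.ext_iff.mp hUA ⟨u, huB⟩).mp huU)
  · rintro ⟨a, ha, rfl⟩
    exact ⟨a, (Set.ext_iff.mp hUA ⟨a, hAB ha⟩).mpr ha, rfl⟩

theorem relIndex_ne_zero_of_compactSpace {K A B L : Subgroup G} [(K.subgroupOf L).Normal]
    [CompactSpace (L ⧸ K.subgroupOf L)] (hKA : K ≤ A) (hAB : A ≤ B) (hBL : B ≤ L)
    (hB : IsClosed (B : Set G)) (hA : IsOpen (A.subgroupOf B : Set B)) : A.relIndex B ≠ 0 := by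
  set f := QuotientGroup.mk' (K.subgroupOf L)
  have hKA' : f.ker ≤ A.subgroupOf L := by
    rw [QuotientGroup.ker_mk']; exact subgroupOf_mono L hKA
  have hrel : ((A.subgroupOf L).map f).relIndex ((B.subgroupOf L).map f) = A.relIndex B := by
    rw [relIndex_map_map, sup_eq_left.mpr hKA',
      sup_eq_left.mpr (hKA'.trans (subgroupOf_mono L hAB)), relIndex_subgroupOf hBL]
  have : CompactSpace ((B.subgroupOf L).map f) := isCompact_iff_compactSpace.mp
    (isClosed_map_mk' (subgroupOf_mono L (hKA.trans hAB))
      (hB.preimage continuous_subtype_val)).isCompact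
  have := quotient_finite_of_isOpen _ (isOpen_map_mk'_subgroupOf (L := L) hKA hAB hA)
  rw [← hrel]
  exact index_ne_zero_of_finite

end Topology

end Subgroup

section IsZQuotient

open Subgroup

variable {G : Type*} [Group G] [TopologicalSpace G]

/-- `IsZFactor c i` unfolds to `IsZQuotient (c i.castSucc) (c i.succ)`. -/
def IsZQuotient (A B : Subgroup G) : Prop :=
  ∃ h : (A.subgroupOf B).Normal,
    haveI := h
    DiscreteTopology (↥B ⧸ A.subgroupOf B) ∧
      Nonempty ((↥B ⧸ A.subgroupOf B) ≃* Multiplicative ℤ)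

theorem IsZQuotient.relIndex_eq_zero {A B : Subgroup G} (h : IsZQuotient A B) :
    A.relIndex B = 0 := by
  obtain ⟨_, -, ⟨e⟩⟩ := h
  rw [relIndex, index_eq_card, Nat.card_congr e.toEquiv, Nat.card_eq_zero_of_infinite]

theorem IsZQuotient.not_le {A B : Subgroup G} (h : IsZQuotient A B) : ¬ B ≤ A := fun hBA =>
  zero_ne_one (h.relIndex_eq_zero ▸ relIndex_eq_one.mpr hBA)

variable [IsTopologicalGroup G]

theorem IsZQuotient.eq_and_isZQuotient_of_le {K A B L : Subgroup G} [(K.subgroupOf L).Normal]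
    (hKA : K ≤ A) (hAB : A ≤ B) (hBL : B ≤ L) (hB : IsClosed (B : Set G))
    (hL : IsCyclic (L ⧸ K.subgroupOf L) ∨ CompactSpace (L ⧸ K.subgroupOf L))
    (h : IsZQuotient A B) : A = K ∧ IsZQuotient K L := by
  have hidx := h.relIndex_eq_zero
  obtain ⟨_, hdisc, -⟩ := h
  have hA : IsOpen (A.subgroupOf B : Set B) := QuotientGroup.discreteTopology_iff.mp hdisc
  rcases hL with hL | hL
  · obtain ⟨hAK, hfin, hinf⟩ := eq_of_relIndex_eq_zero_of_isCyclic (subgroupOf_mono L hKA)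
      (subgroupOf_mono L hAB) (by rwa [relIndex_subgroupOf hBL])
    obtain rfl : A = K := by
      rwa [subgroupOf_inj, inf_of_le_left (hAB.trans hBL),
        inf_of_le_left (hKA.trans (hAB.trans hBL))] at hAK
    exact ⟨rfl, inferInstance, QuotientGroup.discreteTopology_iff.mpr
      (isOpen_subgroupOf_of_finiteIndex hAB hB hA), ⟨intCyclicMulEquiv.symm⟩⟩
  · exact absurd hidx (relIndex_ne_zero_of_compactSpace hKA hAB hBL hB hA)

theorem IsZQuotient.of_le {K B L : Subgroup G} (h : IsZQuotient K L) (hBL : B ≤ L)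
    (hB : ¬ B ≤ K) : IsZQuotient K B := by
  obtain ⟨_, hdisc, ⟨e⟩⟩ := h
  have := normal_subgroupOf_of_le (K := K) hBL
  have : IsCyclic (L ⧸ K.subgroupOf L) :=
    isCyclic_of_surjective e.symm.toMonoidHom e.symm.surjective
  have : Infinite (L ⧸ K.subgroupOf L) := e.toEquiv.infinite_iff.mpr inferInstance
  exact ⟨inferInstance, QuotientGroup.discreteTopology_iff.mpr
    (isOpen_subgroupOf_of_le hBL (QuotientGroup.discreteTopology_iff.mp hdisc)),
    nonempty_quotient_subgroupOf_mulEquiv_int hBL hB⟩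

end IsZQuotient

theorem Fin.exists_castSucc_and_not_succ {n : ℕ} (P : Fin (n + 1) → Prop) {a b : Fin (n + 1)}
    (hab : a ≤ b) (ha : P a) (hb : ¬ P b) :
    ∃ i : Fin n, a ≤ i.castSucc ∧ i.succ ≤ b ∧ P i.castSucc ∧ ¬ P i.succ := by
  induction b using Fin.induction with
  | zero => exact absurd (Fin.le_zero_iff.mp hab ▸ ha) hb
  | succ i ih =>
    have hai : a ≤ i.castSucc :=
      Fin.le_castSucc_iff.mpr (hab.lt_of_ne fun h => hb (h ▸ ha))
    by_cases hi : P i.castSucc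
    · exact ⟨i, hai, le_rfl, hi, hb⟩
    · obtain ⟨j, haj, hji, hj⟩ := ih hai hi
      exact ⟨j, haj, hji.trans (Fin.castSucc_le_succ i), hj⟩

/-- The `j`-th factor of a refinement lies within the `i`-th factor of the refined series, whose
terms sit at the positions `φ i` of the refinement. -/
def InBlock {n m : ℕ} (φ : Fin (n + 1) → Fin (m + 1)) (i : Fin n) (j : Fin m) : Prop :=
  φ i.castSucc ≤ j.castSucc ∧ j.succ ≤ φ i.succ

theorem exists_inBlock {n m : ℕ} {φ : Fin (n + 1) → Fin (m + 1)} {j : Fin m}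
    (h0 : φ 0 ≤ j.castSucc) (hlast : j.succ ≤ φ (Fin.last n)) : ∃ i, InBlock φ i j := by
  obtain ⟨i, -, -, hi, hi'⟩ := Fin.exists_castSucc_and_not_succ (fun p => φ p ≤ j.castSucc)
    (Fin.zero_le _) h0 (not_le.mpr (Fin.castSucc_lt_iff_succ_le.mpr hlast))
  exact ⟨i, hi, Fin.castSucc_lt_iff_succ_le.mp (not_le.mp hi')⟩

theorem InBlock.unique {n m : ℕ} {φ : Fin (n + 1) → Fin (m + 1)} (hφ : Monotone φ)
    {i i' : Fin n} {j : Fin m} (h : InBlock φ i j) (h' : InBlock φ i' j) : i = i' := by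
  have key : ∀ {i i'}, InBlock φ i j → InBlock φ i' j → ¬ i < i' := fun h h' hlt =>
    Fin.castSucc_lt_succ.not_ge (h.2.trans ((hφ (Fin.succ_le_castSucc_iff.mpr hlt)).trans h'.1))
  exact le_antisymm (not_lt.mp (key h' h)) (not_lt.mp (key h h'))

theorem Monotone.eq_of_apply_castSucc_eq {α : Type*} [Preorder α] {m : ℕ}
    {c : Fin (m + 1) → α} (hc : Monotone c) {a b : Fin m} (ha : ¬ c a.succ ≤ c a.castSucc)
    (hb : ¬ c b.succ ≤ c b.castSucc) (hab : c a.castSucc = c b.castSucc) : a = b := by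
  rcases lt_trichotomy a b with h | h | h
  · exact absurd ((hc (Fin.succ_le_castSucc_iff.mpr h)).trans hab.ge) ha
  · exact h
  · exact absurd ((hc (Fin.succ_le_castSucc_iff.mpr h)).trans hab.le) hb

section Refinement

variable {G : Type*} [Group G] [TopologicalSpace G] {n m : ℕ} {c : Fin (n + 1) → Subgroup G}
  {c' : Fin (m + 1) → Subgroup G} {φ : Fin (n + 1) → Fin (m + 1)}

theorem IsClosedSeries.monotone (hc : IsClosedSeries c) : Monotone c :=
  Fin.monotone_iff_le_succ.mpr hc.le

theorem exists_inBlock_of_not_le (hc : IsClosedSeries c) (hc' : IsClosedSeries c')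
    (href : ∀ i, c' (φ i) = c i) {j : Fin m} (hj : ¬ c' j.succ ≤ c' j.castSucc) :
    ∃ i, InBlock φ i j := by
  refine exists_inBlock (not_lt.mp fun h => hj ?_) (not_lt.mp fun h => hj ?_)
  · calc c' j.succ ≤ c' (φ 0) := hc'.monotone (Fin.castSucc_lt_iff_succ_le.mp h)
      _ = ⊥ := by rw [href, hc.bot]
      _ ≤ c' j.castSucc := bot_le
  · calc c' j.succ ≤ ⊤ := le_top
      _ = c' (φ (Fin.last n)) := by rw [href, hc.top]
      _ ≤ c' j.castSucc := hc'.monotone (Fin.le_castSucc_iff.mpr h)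

variable [IsTopologicalGroup G]

theorem isZFactor_of_inBlock (hc : IsClosedSeries c)
    (hfac : ∀ i, IsCyclicFactor c i ∨ IsCompactFactor c i) (hc' : IsClosedSeries c')
    (href : ∀ i, c' (φ i) = c i) {i : Fin n} {j : Fin m} (hij : InBlock φ i j)
    (hj : IsZFactor c' j) : c' j.castSucc = c i.castSucc ∧ IsZFactor c i := by
  have := hc.normal i
  exact IsZQuotient.eq_and_isZQuotient_of_le (href i.castSucc ▸ hc'.monotone hij.1) (hc'.le j)
    (href i.succ ▸ hc'.monotone hij.2) (hc'.closed j.succ)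
    ((hfac i).imp (fun ⟨_, h⟩ => h) id) hj

theorem exists_inBlock_isZFactor (hc' : IsClosedSeries c') (hφ : Monotone φ)
    (href : ∀ i, c' (φ i) = c i) {i : Fin n} (hi : IsZFactor c i) :
    ∃ j, InBlock φ i j ∧ IsZFactor c' j := by
  obtain ⟨j, hij, hji, hj, hj'⟩ :=
    Fin.exists_castSucc_and_not_succ (fun p => c' p ≤ c i.castSucc) (hφ (Fin.castSucc_le_succ i))
      (href _).le (by simpa only [href] using IsZQuotient.not_le hi)
  have hK : c' j.castSucc = c i.castSucc := le_antisymm hj (href i.castSucc ▸ hc'.monotone hij)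
  refine ⟨j, ⟨hij, hji⟩, ?_⟩
  show IsZQuotient _ _
  rw [hK]
  exact IsZQuotient.of_le hi (href i.succ ▸ hc'.monotone hji) hj'

end Refinement

/-- Let `G` be a topological group with a normal series
`1 = G₀ ⊴ G₁ ⊴ ⋯ ⊴ Gₙ = G` of closed subgroups whose factors are each either cyclic or
compact.  Then any refinement of this series by closed normal subgroups has the same
number of infinite cyclic factors as the original series. -/
theorem zCount_refinement_eq
    {G : Type*} [Group G] [TopologicalSpace G] [IsTopologicalGroup G]
    {n : ℕ} (c : Fin (n + 1) → Subgroup G) (hc : IsClosedSeries c)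
    (hfac : ∀ i : Fin n, IsCyclicFactor c i ∨ IsCompactFactor c i)
    {m : ℕ} (c' : Fin (m + 1) → Subgroup G) (hc' : IsClosedSeries c')
    (φ : Fin (n + 1) → Fin (m + 1)) (hφ : StrictMono φ) (href : ∀ i, c' (φ i) = c i) :
    zCount c' = zCount c := by
  choose F hF using fun j : {j // IsZFactor c' j} =>
    exists_inBlock_of_not_le hc hc' href (IsZQuotient.not_le j.2)
  have hFZ := fun j => isZFactor_of_inBlock hc hfac hc' href (hF j) j.2
  refine Nat.card_eq_of_bijective (fun j => ⟨F j, (hFZ j).2⟩)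
    ⟨fun a b hab => ?_, fun i => ?_⟩
  · have hab : F a = F b := congrArg Subtype.val hab
    exact Subtype.ext <| hc'.monotone.eq_of_apply_castSucc_eq (IsZQuotient.not_le a.2)
      (IsZQuotient.not_le b.2) (by rw [(hFZ a).1, (hFZ b).1, hab])
  · obtain ⟨j, hij, hj⟩ := exists_inBlock_isZFactor hc' hφ.monotone href i.2
    exact ⟨⟨j, hj⟩, Subtype.ext ((hF ⟨j, hj⟩).unique hφ.monotone hij)⟩
end

section
/- Let 1 → N → G → K → 1 be a short exact sequence of locally compact, compactly generated groups with N compact or cocompact. Then asdim(G) ≤ asdim(N) + asdim(K). If moreover the sequence splits topologically and N is locally elliptic, then asdim(G) = asdim(K). -/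
/-- `ASDimLE d n`: with respect to the distance function `d`, the asymptotic dimension is
at most `n`.  For every `r > 0` there is a uniformly bounded cover such that every
`r`-ball meets at most `n + 1` members of the cover. -/
def ASDimLE {X : Type*} (d : X → X → ℝ) (n : ℕ) : Prop :=
  ∀ r : ℝ, 0 < r → ∃ (U : Set (Set X)) (D : ℝ),
    (∀ x : X, ∃ u ∈ U, x ∈ u) ∧
    (∀ u ∈ U, ∀ x ∈ u, ∀ y ∈ u, d x y ≤ D) ∧
    (∀ x : X, {u | u ∈ U ∧ ∃ y ∈ u, d x y < r}.Finite ∧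
      Nat.card {u // u ∈ U ∧ ∃ y ∈ u, d x y < r} ≤ n + 1)

/-- The asymptotic dimension (in `ℕ∞`) of `X` with respect to the distance function `d`. -/
noncomputable def asDim {X : Type*} (d : X → X → ℝ) : ℕ∞ :=
  sInf ((fun n : ℕ => (n : ℕ∞)) '' {n : ℕ | ASDimLE d n})

/-- An adapted (plig) metric on a topological group: a proper, left-invariant metric
generating the topology. -/
structure IsAdaptedMetric (G : Type*) [Group G] [TopologicalSpace G] (d : G → G → ℝ) : Prop where
  self : ∀ x, d x x = 0
  pos : ∀ x y, x ≠ y → 0 < d x y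
  symm : ∀ x y, d x y = d y x
  triangle : ∀ x y z, d x z ≤ d x y + d y z
  leftInvariant : ∀ g x y, d (g * x) (g * y) = d x y
  proper : ∀ x r, IsCompact {y | d x y ≤ r}
  compatible : ∀ s : Set G, IsOpen s ↔ ∀ x ∈ s, ∃ ε > 0, {y | d x y < ε} ⊆ s

/-- A locally compact group is locally elliptic if every compact subset is contained in a
compact open subgroup. -/
def LocallyElliptic (X : Type*) [Group X] [TopologicalSpace X] : Prop :=
  ∀ K : Set X, IsCompact K → ∃ U : Subgroup X,
    IsCompact (U : Set X) ∧ IsOpen (U : Set X) ∧ K ⊆ (U : Set X)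

/-!
Asymptotic dimension does not increase under coarse embeddings: pulling back a uniformly
bounded cover of small multiplicity along a bornologous, effectively proper map gives such a
cover of the source. If `N` is compact, the quotient map `G → G ⧸ N` is a proper continuous
homomorphism, hence a coarse embedding, so `asdim G ≤ asdim (G ⧸ N)`. If `G ⧸ N` is compact,
then `N` is coarsely dense in `G` (a compact set `Q` maps onto `G ⧸ N`, so every `g` is within
`sup_Q d(1, q⁻¹)` of `g q⁻¹ ∈ N`), and a choice of nearby points of `N` is a coarse embedding
`G → N`, so `asdim G ≤ asdim N`.

A continuous section `G ⧸ N → G` is a coarse embedding, since the quotient map is bornologous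
and undoes it; hence `asdim (G ⧸ N) ≤ asdim G`. A locally elliptic `N` has asymptotic dimension
zero: the left cosets of a compact open subgroup containing the `r`-ball around `1` form a
uniformly bounded cover in which every `r`-ball meets only one member.
-/

open Set
open scoped Pointwise

section Coarse

variable {X Y : Type*}

def IsBornologous (dX : X → X → ℝ) (dY : Y → Y → ℝ) (f : X → Y) : Prop :=
  ∀ R, ∃ S, ∀ x y, dX x y ≤ R → dY (f x) (f y) ≤ S

def IsEffectivelyProper (dX : X → X → ℝ) (dY : Y → Y → ℝ) (f : X → Y) : Prop :=
  ∀ S, ∃ R, ∀ x y, dY (f x) (f y) ≤ S → dX x y ≤ R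

variable {dX : X → X → ℝ} {dY : Y → Y → ℝ}

lemma ASDimLE.of_isBornologous_of_isEffectivelyProper {f : X → Y} {n : ℕ}
    (hb : IsBornologous dX dY f) (hp : IsEffectivelyProper dX dY f) (h : ASDimLE dY n) :
    ASDimLE dX n := by
  intro r hr
  obtain ⟨S, hS⟩ := hb r
  obtain ⟨U, D, hcov, hbdd, hmult⟩ := h (max S 0 + 1) (by positivity)
  obtain ⟨E, hE⟩ := hp D
  refine ⟨(f ⁻¹' ·) '' U, E, fun x => ?_, ?_, fun x => ?_⟩
  · obtain ⟨u, hu, hxu⟩ := hcov (f x)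
    exact ⟨f ⁻¹' u, mem_image_of_mem _ hu, hxu⟩
  · rintro _ ⟨u, hu, rfl⟩ x hx y hy
    exact hE x y (hbdd u hu _ hx _ hy)
  · set near := {u | u ∈ U ∧ ∃ y ∈ u, dY (f x) y < max S 0 + 1}
    have hnear : {u | u ∈ (f ⁻¹' ·) '' U ∧ ∃ y ∈ u, dX x y < r} ⊆ (f ⁻¹' ·) '' near := by
      rintro _ ⟨⟨u, hu, rfl⟩, y, hy, hxy⟩
      refine ⟨u, ⟨hu, f y, hy, ?_⟩, rfl⟩
      linarith [hS x y hxy.le, le_max_left S 0]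
    have hfin : ((f ⁻¹' ·) '' near).Finite := (hmult (f x)).1.image _
    refine ⟨hfin.subset hnear, ?_⟩
    calc Nat.card {u // u ∈ (f ⁻¹' ·) '' U ∧ ∃ y ∈ u, dX x y < r}
        ≤ Nat.card ((f ⁻¹' ·) '' near) := Nat.card_mono hfin hnear
      _ ≤ Nat.card near := Nat.card_image_le (hmult (f x)).1
      _ ≤ n + 1 := (hmult (f x)).2

lemma asDim_le_of_isBornologous_of_isEffectivelyProper {f : X → Y}
    (hb : IsBornologous dX dY f) (hp : IsEffectivelyProper dX dY f) : asDim dX ≤ asDim dY :=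
  sInf_le_sInf <| by
    rintro _ ⟨n, hn, rfl⟩
    exact ⟨n, hn.of_isBornologous_of_isEffectivelyProper hb hp, rfl⟩

lemma IsEffectivelyProper.of_leftInverse {f : X → Y} {g : Y → X} (hg : IsBornologous dY dX g)
    (hgf : Function.LeftInverse g f) : IsEffectivelyProper dX dY f := fun S => by
  obtain ⟨R, hR⟩ := hg S
  exact ⟨R, fun x y h => by simpa only [hgf x, hgf y] using hR _ _ h⟩

section Retraction

variable {ι : Y → X} {ρ : X → Y} {C : ℝ}

lemma dist_le_add_of_close (hsymm : ∀ x y, dX x y = dX y x)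
    (htri : ∀ x y z, dX x z ≤ dX x y + dX y z) {x y x' y' : X} (hx : dX x x' ≤ C)
    (hy : dX y y' ≤ C) : dX x' y' ≤ dX x y + 2 * C := by
  linarith [htri x' x y', htri x y y', hsymm x x']

lemma IsEffectivelyProper.isBornologous_of_close (hsymm : ∀ x y, dX x y = dX y x)
    (htri : ∀ x y z, dX x z ≤ dX x y + dX y z) (hι : IsEffectivelyProper dY dX ι)
    (hρ : ∀ x, dX x (ι (ρ x)) ≤ C) : IsBornologous dX dY ρ := fun R => by
  obtain ⟨S, hS⟩ := hι (R + 2 * C)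
  exact ⟨S, fun x y h => hS _ _ <| by
    linarith [dist_le_add_of_close hsymm htri (hρ x) (hρ y)]⟩

lemma IsBornologous.isEffectivelyProper_of_close (hsymm : ∀ x y, dX x y = dX y x)
    (htri : ∀ x y z, dX x z ≤ dX x y + dX y z) (hι : IsBornologous dY dX ι)
    (hρ : ∀ x, dX x (ι (ρ x)) ≤ C) : IsEffectivelyProper dX dY ρ := fun S => by
  obtain ⟨R, hR⟩ := hι S
  refine ⟨R + 2 * C, fun x y h => ?_⟩
  have hx : dX (ι (ρ x)) x ≤ C := hsymm x _ ▸ hρ x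
  have hy : dX (ι (ρ y)) y ≤ C := hsymm y _ ▸ hρ y
  linarith [dist_le_add_of_close hsymm htri hx hy, hR _ _ h]

end Retraction

end Coarse

namespace IsAdaptedMetric

variable {H : Type*} [Group H] [TopologicalSpace H] {d : H → H → ℝ}

lemma dist_eq_dist_one_inv_mul (hd : IsAdaptedMetric H d) (x y : H) :
    d x y = d 1 (x⁻¹ * y) := by
  simpa using (hd.leftInvariant x⁻¹ x y).symm

lemma isOpen_setOf_dist_lt (hd : IsAdaptedMetric H d) (x : H) (r : ℝ) :
    IsOpen {y | d x y < r} :=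
  (hd.compatible _).2 fun z hz => ⟨r - d x z, sub_pos.2 hz, fun y hy =>
    show d x y < r by linarith [hd.triangle x z y, show d z y < r - d x z from hy]⟩

lemma exists_dist_one_le_of_isCompact (hd : IsAdaptedMetric H d) {C : Set H}
    (hC : IsCompact C) : ∃ M : ℝ, ∀ x ∈ C, d 1 x ≤ M := by
  obtain ⟨t, ht⟩ := hC.elim_finite_subcover (fun n : ℕ => {y | d 1 y < n})
    (fun n => hd.isOpen_setOf_dist_lt 1 n) fun x _ =>
      mem_iUnion.2 ⟨⌈d 1 x⌉₊ + 1, show d 1 x < _ by push_cast; linarith [Nat.le_ceil (d 1 x)]⟩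
  refine ⟨(t.sup id : ℕ), fun x hx => ?_⟩
  obtain ⟨n, hn, hxn⟩ := mem_iUnion₂.1 (ht hx)
  exact hxn.le.trans (by exact_mod_cast Finset.le_sup (f := id) hn)

end IsAdaptedMetric

namespace MonoidHom

variable {H K : Type*} [Group H] [TopologicalSpace H] [Group K] [TopologicalSpace K]
  {dH : H → H → ℝ} {dK : K → K → ℝ}

lemma isBornologous_of_continuous (hdH : IsAdaptedMetric H dH) (hdK : IsAdaptedMetric K dK)
    (f : H →* K) (hf : Continuous f) : IsBornologous dH dK f := fun R => by
  obtain ⟨M, hM⟩ := hdK.exists_dist_one_le_of_isCompact ((hdH.proper 1 R).image hf)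
  refine ⟨M, fun x y hxy => ?_⟩
  rw [hdK.dist_eq_dist_one_inv_mul, ← map_inv, ← map_mul]
  exact hM _ ⟨x⁻¹ * y, by rwa [mem_ofPred_eq, ← hdH.dist_eq_dist_one_inv_mul], rfl⟩

lemma isEffectivelyProper_of_isProperMap (hdH : IsAdaptedMetric H dH)
    (hdK : IsAdaptedMetric K dK) (f : H →* K) (hf : IsProperMap f) :
    IsEffectivelyProper dH dK f := fun R => by
  obtain ⟨M, hM⟩ := hdH.exists_dist_one_le_of_isCompact (hf.isCompact_preimage (hdK.proper 1 R))
  refine ⟨M, fun x y hxy => ?_⟩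
  rw [hdH.dist_eq_dist_one_inv_mul]
  refine hM _ ?_
  rwa [mem_preimage, mem_ofPred_eq, map_mul, map_inv, ← hdK.dist_eq_dist_one_inv_mul]

end MonoidHom

lemma IsOpenMap.exists_isCompact_subset_image {X Y : Type*} [TopologicalSpace X]
    [TopologicalSpace Y] [WeaklyLocallyCompactSpace X] {f : X → Y} (hf : IsOpenMap f)
    (hsurj : Function.Surjective f) {K : Set Y} (hK : IsCompact K) :
    ∃ L : Set X, IsCompact L ∧ K ⊆ f '' L := by
  choose g hg using hsurj
  choose V hVc hVn using fun y => exists_compact_mem_nhds (g y)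
  obtain ⟨t, -, ht⟩ := hK.elim_nhds_subcover (fun y => f '' V y)
    fun y _ => by simpa only [hg y] using hf.image_mem_nhds (hVn y)
  refine ⟨⋃ y ∈ t, V y, t.isCompact_biUnion fun y _ => hVc y, ?_⟩
  rwa [image_iUnion₂]

namespace QuotientGroup

variable {G : Type*} [Group G] [TopologicalSpace G] [IsTopologicalGroup G]

lemma isProperMap_mk {H : Subgroup G} (hH : IsCompact (H : Set G)) :
    IsProperMap ((↑) : G → G ⧸ H) := by
  refine isProperMap_iff_isClosedMap_and_compact_fibers.2
    ⟨continuous_mk, isClosedMap_coe hH, mk_surjective.forall.2 fun g => ?_⟩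
  rw [← image_singleton, preimage_image_mk_eq_mul]
  exact isCompact_singleton.mul hH

lemma exists_dist_subgroup_le [WeaklyLocallyCompactSpace G] {d : G → G → ℝ}
    (hd : IsAdaptedMetric G d) (N : Subgroup G) [N.Normal] [CompactSpace (G ⧸ N)] :
    ∃ C : ℝ, ∀ g : G, ∃ m : N, d g m ≤ C := by
  obtain ⟨Q, hQc, hQ⟩ := isOpenMap_coe.exists_isCompact_subset_image mk_surjective
    (isCompact_univ (X := G ⧸ N))
  obtain ⟨C, hC⟩ := hd.exists_dist_one_le_of_isCompact hQc.inv
  refine ⟨C, fun g => ?_⟩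
  obtain ⟨q, hq, hqg⟩ := hQ (mem_univ (g : G ⧸ N))
  refine ⟨⟨g / q, eq_iff_div_mem.1 hqg.symm⟩, ?_⟩
  change d g (g / q) ≤ C
  rw [hd.dist_eq_dist_one_inv_mul, div_eq_mul_inv, inv_mul_cancel_left]
  exact hC _ (inv_mem_inv.2 hq)

end QuotientGroup

lemma LocallyElliptic.asDimLE_zero {H : Type*} [Group H] [TopologicalSpace H]
    {d : H → H → ℝ} (hd : IsAdaptedMetric H d) (hH : LocallyElliptic H) : ASDimLE d 0 := by
  intro r _
  obtain ⟨U, hUc, -, hball⟩ := hH _ (hd.proper 1 r)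
  obtain ⟨M, hM⟩ := hd.exists_dist_one_le_of_isCompact hUc
  refine ⟨range fun g : H => g • (U : Set H), M,
    fun x => ⟨_, mem_range_self x, (mem_leftCoset_iff x).2 (by simp [U.one_mem])⟩, ?_, fun x => ?_⟩
  · rintro _ ⟨g, rfl⟩ x hx y hy
    rw [mem_leftCoset_iff] at hx hy
    rw [hd.dist_eq_dist_one_inv_mul, show x⁻¹ * y = (g⁻¹ * x)⁻¹ * (g⁻¹ * y) by group]
    exact hM _ (U.mul_mem (U.inv_mem hx) hy)
  · have hsub : {u | u ∈ range (fun g : H => g • (U : Set H)) ∧ ∃ y ∈ u, d x y < r} ⊆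
        {x • (U : Set H)} := by
      rintro _ ⟨⟨g, rfl⟩, y, hy, hxy⟩
      have hxy' : x⁻¹ * y ∈ U :=
        hball (show d 1 (x⁻¹ * y) ≤ r from hd.dist_eq_dist_one_inv_mul x y ▸ hxy.le)
      show g • (U : Set H) = x • (U : Set H)
      rw [(leftCoset_eq_iff U).2 ((mem_leftCoset_iff g).1 hy),
        (leftCoset_eq_iff U).2 (by simpa using U.inv_mem hxy')]
    refine ⟨(finite_singleton _).subset hsub, ?_⟩
    calc Nat.card {u // u ∈ range (fun g : H => g • (U : Set H)) ∧ ∃ y ∈ u, d x y < r}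
        ≤ Nat.card ({x • (U : Set H)} : Set (Set H)) := Nat.card_mono (finite_singleton _) hsub
      _ = 0 + 1 := by simp

theorem asDim_extension_le_general
    (G : Type*) [Group G] [TopologicalSpace G] [IsTopologicalGroup G]
    [LocallyCompactSpace G]
    (N : Subgroup G) [N.Normal] (hNclosed : IsClosed (N : Set G))
    (hcc : IsCompact (N : Set G) ∨ CompactSpace (G ⧸ N))
    (dG : G → G → ℝ) (hdG : IsAdaptedMetric G dG)
    (dN : ↥N → ↥N → ℝ) (hdN : IsAdaptedMetric ↥N dN)
    (dK : (G ⧸ N) → (G ⧸ N) → ℝ) (hdK : IsAdaptedMetric (G ⧸ N) dK) :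
    asDim dG ≤ asDim dN + asDim dK ∧
    ((∃ s : (G ⧸ N) →* G, Continuous s ∧
        (QuotientGroup.mk' N).comp s = MonoidHom.id (G ⧸ N)) →
      LocallyElliptic ↥N → asDim dG = asDim dK) := by
  have hπ : IsBornologous dG dK (QuotientGroup.mk' N) :=
    (QuotientGroup.mk' N).isBornologous_of_continuous hdG hdK continuous_quotient_mk'
  have h_compact (hN : IsCompact (N : Set G)) : asDim dG ≤ asDim dK :=
    asDim_le_of_isBornologous_of_isEffectivelyProper hπ <|
      (QuotientGroup.mk' N).isEffectivelyProper_of_isProperMap hdG hdK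
        (QuotientGroup.isProperMap_mk hN)
  have h_cocompact [CompactSpace (G ⧸ N)] : asDim dG ≤ asDim dN := by
    have hι_proper := N.subtype.isEffectivelyProper_of_isProperMap hdN hdG
      hNclosed.isClosedEmbedding_subtypeVal.isProperMap
    have hι_born := N.subtype.isBornologous_of_continuous hdN hdG continuous_subtype_val
    obtain ⟨C, hC⟩ := QuotientGroup.exists_dist_subgroup_le hdG N
    choose ρ hρ using hC
    exact asDim_le_of_isBornologous_of_isEffectivelyProper
      (hι_proper.isBornologous_of_close hdG.symm hdG.triangle hρ)
      (hι_born.isEffectivelyProper_of_close hdG.symm hdG.triangle hρ)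
  refine ⟨hcc.elim (fun hN => (h_compact hN).trans le_add_self)
    (fun _ => h_cocompact.trans le_self_add), ?_⟩
  rintro ⟨s, hs, hπs⟩ hN
  have h_section : asDim dK ≤ asDim dG :=
    asDim_le_of_isBornologous_of_isEffectivelyProper
      (s.isBornologous_of_continuous hdK hdG hs)
      (IsEffectivelyProper.of_leftInverse hπ (DFunLike.congr_fun hπs))
  refine le_antisymm ?_ h_section
  rcases hcc with hN_compact | _
  · exact h_compact hN_compact
  · calc asDim dG ≤ asDim dN := h_cocompact
      _ ≤ (0 : ℕ) := sInf_le ⟨0, hN.asDimLE_zero hdN, rfl⟩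
      _ ≤ asDim dK := by simp

/-- Let `1 → N → G → K → 1` be a short exact sequence of locally
compact, compactly generated groups (realized as `N ⊴ G` closed and `K = G ⧸ N`) with `N`
compact or cocompact.  Then `asdim(G) ≤ asdim(N) + asdim(K)` (with respect to any adapted
metrics).  If moreover the sequence splits topologically and `N` is locally elliptic,
then `asdim(G) = asdim(K)`. -/
theorem asDim_extension_le
    (G : Type*) [Group G] [TopologicalSpace G] [IsTopologicalGroup G]
    [LocallyCompactSpace G] [T2Space G]
    (N : Subgroup G) [N.Normal] (hNclosed : IsClosed (N : Set G))
    (hcc : IsCompact (N : Set G) ∨ CompactSpace (G ⧸ N))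
    (hcgG : ∃ K : Set G, IsCompact K ∧ Subgroup.closure K = ⊤)
    (hcgN : ∃ K : Set ↥N, IsCompact K ∧ Subgroup.closure K = ⊤)
    (hcgK : ∃ K : Set (G ⧸ N), IsCompact K ∧ Subgroup.closure K = ⊤)
    (dG : G → G → ℝ) (hdG : IsAdaptedMetric G dG)
    (dN : ↥N → ↥N → ℝ) (hdN : IsAdaptedMetric ↥N dN)
    (dK : (G ⧸ N) → (G ⧸ N) → ℝ) (hdK : IsAdaptedMetric (G ⧸ N) dK) :
    asDim dG ≤ asDim dN + asDim dK ∧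
    ((∃ s : (G ⧸ N) →* G, Continuous s ∧
        (QuotientGroup.mk' N).comp s = MonoidHom.id (G ⧸ N)) →
      LocallyElliptic ↥N → asDim dG = asDim dK) :=
  asDim_extension_le_general G N hNclosed hcc dG hdG dN hdN dK hdK
end

section
/- Let G be a totally disconnected, locally compact, second countable, compactly generated group. If G has a compact open subgroup H, then asdim(G) = asdim(G/H), where G/H carries the quotient metric. Consequently: (a) if every discrete quotient G/H (H open) has finite asymptotic dimension then asdim(G) < ∞; and (b) if asdim(G) < ∞ then G has a discrete quotient of finite asymptotic dimension. -/
/-- The quotient metric induced on the coset space `G ⧸ H` by a metric on `G`. -/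
noncomputable def quotientDist {G : Type*} [Group G] (H : Subgroup G) (d : G → G → ℝ)
    (a b : G ⧸ H) : ℝ :=
  sInf {r : ℝ | ∃ x y : G, (x : G ⧸ H) = a ∧ (y : G ⧸ H) = b ∧ d x y = r}

/-!
A compact subgroup `H` lies in some ball `{h | d 1 h ≤ C}` and, by left invariance, every coset
`xH` is a translate of it; so the quotient map `G → G ⧸ H` changes distances by at most `2C`. A
surjection with bounded additive distortion carries uniformly bounded covers of bounded
multiplicity back and forth, hence preserves asymptotic dimension. By van Dantzig's theorem a
compact open subgroup exists: the stabiliser, under left translation, of a compact clopen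
neighbourhood of `1`. This gives both consequences.
-/

open Set Pointwise

theorem exists_isCompact_isOpen_subgroup (G : Type*) [Group G] [TopologicalSpace G]
    [IsTopologicalGroup G] [LocallyCompactSpace G] [T2Space G] [TotallyDisconnectedSpace G] :
    ∃ H : Subgroup G, IsCompact (H : Set G) ∧ IsOpen (H : Set G) := by
  obtain ⟨K, hK, hK1⟩ := exists_compact_mem_nhds (1 : G)
  obtain ⟨V, hVclopen, h1V, hVK⟩ := loc_compact_Haus_tot_disc_of_zero_dim.mem_nhds_iff.1 hK1
  have hV : IsCompact V := hK.of_isClosed_subset hVclopen.isClosed hVK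
  obtain ⟨W, hW1, hWV⟩ := compact_open_separated_mul_left hV hVclopen.isOpen le_rfl
  let H := MulAction.stabilizer G V
  have hWH : W ∩ W⁻¹ ⊆ H := fun g hg => by
    have hsub : ∀ k ∈ W, k • V ⊆ V := fun k hk => (smul_set_subset_mul hk).trans hWV
    refine (hsub g hg.1).antisymm ?_
    exact Set.subset_smul_set_iff.2 (hsub g⁻¹ hg.2)
  have hHV : (H : Set G) ⊆ V := fun g hg => by
    rw [SetLike.mem_coe, MulAction.mem_stabilizer_iff] at hg
    have := smul_mem_smul_set (a := g) h1V
    rwa [hg, smul_eq_mul, mul_one] at this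
  have hHopen : IsOpen (H : Set G) :=
    H.isOpen_of_mem_nhds (Filter.mem_of_superset (Filter.inter_mem hW1 (inv_mem_nhds_one G hW1)) hWH)
  exact ⟨H, hV.of_isClosed_subset (H.isClosed_of_isOpen hHopen) hHV, hHopen⟩

theorem Set.finite_and_natCard_le_of_subset_image {α β : Type*} {S : Set β} {T : Set α}
    {g : α → β} {m : ℕ} (hST : S ⊆ g '' T) (hT : T.Finite ∧ Nat.card T ≤ m) :
    S.Finite ∧ Nat.card S ≤ m := by
  refine ⟨(hT.1.image g).subset hST, ?_⟩
  calc Nat.card S = S.ncard := Nat.card_coe_set_eq S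
    _ ≤ (g '' T).ncard := Set.ncard_le_ncard hST (hT.1.image g)
    _ ≤ T.ncard := Set.ncard_image_le hT.1
    _ = Nat.card T := (Nat.card_coe_set_eq T).symm
    _ ≤ m := hT.2

section QuasiIsometry

variable {X Y : Type*} {dX : X → X → ℝ} {dY : Y → Y → ℝ} {f : X → Y} {C : ℝ} {n : ℕ}

theorem ASDimLE.comap (hf : ∀ x y, |dY (f x) (f y) - dX x y| ≤ C) (h : ASDimLE dY n) :
    ASDimLE dX n := by
  intro r hr
  obtain ⟨U, D, hcover, hbdd, hmult⟩ := h (r + |C|) (by positivity)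
  refine ⟨(f ⁻¹' ·) '' U, D + C, ?_, ?_, fun x => ?_⟩
  · intro x
    obtain ⟨u, hu, hxu⟩ := hcover (f x)
    exact ⟨f ⁻¹' u, mem_image_of_mem _ hu, hxu⟩
  · rintro _ ⟨u, hu, rfl⟩ x hx y hy
    linarith [hbdd u hu _ hx _ hy, (abs_le.1 (hf x y)).1]
  · refine Set.finite_and_natCard_le_of_subset_image (g := (f ⁻¹' ·)) ?_ (hmult (f x))
    rintro _ ⟨⟨u, hu, rfl⟩, y, hy, hxy⟩
    refine ⟨u, ⟨hu, f y, hy, ?_⟩, rfl⟩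
    linarith [(abs_le.1 (hf x y)).2, le_abs_self C]

theorem ASDimLE.map (hsurj : Function.Surjective f) (hf : ∀ x y, |dY (f x) (f y) - dX x y| ≤ C)
    (h : ASDimLE dX n) : ASDimLE dY n := by
  intro r hr
  obtain ⟨U, D, hcover, hbdd, hmult⟩ := h (r + |C|) (by positivity)
  refine ⟨(f '' ·) '' U, D + C, ?_, ?_, fun a => ?_⟩
  · intro a
    obtain ⟨x, rfl⟩ := hsurj a
    obtain ⟨u, hu, hxu⟩ := hcover x
    exact ⟨f '' u, mem_image_of_mem _ hu, mem_image_of_mem f hxu⟩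
  · rintro _ ⟨u, hu, rfl⟩ _ ⟨x, hx, rfl⟩ _ ⟨y, hy, rfl⟩
    linarith [hbdd u hu _ hx _ hy, (abs_le.1 (hf x y)).2]
  · obtain ⟨x, rfl⟩ := hsurj a
    refine Set.finite_and_natCard_le_of_subset_image (g := (f '' ·)) ?_ (hmult x)
    rintro _ ⟨⟨u, hu, rfl⟩, _, ⟨y, hy, rfl⟩, hxy⟩
    refine ⟨u, ⟨hu, y, hy, ?_⟩, rfl⟩
    linarith [(abs_le.1 (hf x y)).1, le_abs_self C]

theorem asDim_eq_of_surjective (hsurj : Function.Surjective f)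
    (hf : ∀ x y, |dY (f x) (f y) - dX x y| ≤ C) : asDim dX = asDim dY := by
  have : {n | ASDimLE dX n} = {n | ASDimLE dY n} :=
    Set.ext fun _ => ⟨ASDimLE.map hsurj hf, ASDimLE.comap hf⟩
  rw [asDim, asDim, this]

end QuasiIsometry

namespace IsAdaptedMetric

variable {G : Type*} [Group G] [TopologicalSpace G] {d : G → G → ℝ}

theorem nonneg (hd : IsAdaptedMetric G d) (x y : G) : 0 ≤ d x y := by
  linarith [hd.triangle x y x, hd.self x, hd.symm y x]

theorem isOpen_ball (hd : IsAdaptedMetric G d) (x : G) (ε : ℝ) : IsOpen {y | d x y < ε} := by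
  refine (hd.compatible _).2 fun y hy => ⟨ε - d x y, sub_pos.2 hy, fun z hz => ?_⟩
  show d x z < ε
  linarith [hd.triangle x y z, show d y z < ε - d x y from hz]

theorem bddAbove_image_of_isCompact (hd : IsAdaptedMetric G d) (x : G) {K : Set G}
    (hK : IsCompact K) : BddAbove (d x '' K) := by
  obtain ⟨n, hn⟩ := hK.elim_directed_cover (fun n : ℕ => {y | d x y < n})
    (fun n => hd.isOpen_ball x n)
    (fun y _ => mem_iUnion.2 (exists_nat_gt (d x y)))
    (Monotone.directed_le fun _ _ hmn y (hy : d x y < _) =>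
      show d x y < _ from hy.trans_le (Nat.cast_le.2 hmn))
  exact ⟨n, forall_mem_image.2 fun y hy => (hn hy).le⟩

variable {H : Subgroup G}

theorem le_of_mk_eq_mk (hd : IsAdaptedMetric G d) {C : ℝ} (hC : ∀ h ∈ H, d 1 h ≤ C) {x y : G}
    (hxy : (x : G ⧸ H) = y) : d x y ≤ C := by
  have := hd.leftInvariant x 1 (x⁻¹ * y)
  rw [mul_one, mul_inv_cancel_left] at this
  exact this ▸ hC _ (QuotientGroup.eq.1 hxy)

theorem abs_quotientDist_mk_sub_le (hd : IsAdaptedMetric G d) {C : ℝ}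
    (hC : ∀ h ∈ H, d 1 h ≤ C) (x y : G) :
    |quotientDist H d x y - d x y| ≤ 2 * C := by
  have hbdd : BddBelow {r | ∃ x' y' : G, (x' : G ⧸ H) = x ∧ (y' : G ⧸ H) = y ∧ d x' y' = r} := by
    refine ⟨0, ?_⟩
    rintro _ ⟨x', y', -, -, rfl⟩
    exact hd.nonneg x' y'
  have hle : quotientDist H d x y ≤ d x y := csInf_le hbdd ⟨x, y, rfl, rfl, rfl⟩
  have hge : d x y ≤ quotientDist H d x y + 2 * C := by
    rw [← sub_le_iff_le_add]
    refine le_csInf ⟨d x y, x, y, rfl, rfl, rfl⟩ ?_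
    rintro _ ⟨x', y', hx, hy, rfl⟩
    linarith [hd.triangle x x' y, hd.triangle x' y' y, hd.symm x x',
      hd.le_of_mk_eq_mk hC hx, hd.le_of_mk_eq_mk hC hy]
  rw [abs_sub_comm, abs_le]
  constructor <;> linarith

theorem asDim_eq_asDim_quotientDist (hd : IsAdaptedMetric G d) (hH : IsCompact (H : Set G)) :
    asDim d = asDim (quotientDist H d) := by
  obtain ⟨C, hC⟩ := hd.bddAbove_image_of_isCompact 1 hH
  exact asDim_eq_of_surjective QuotientGroup.mk_surjective
    (hd.abs_quotientDist_mk_sub_le fun h hh => hC (mem_image_of_mem _ hh))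

end IsAdaptedMetric

theorem asDim_tdlcsc_general
    (G : Type*) [Group G] [TopologicalSpace G] [IsTopologicalGroup G]
    [LocallyCompactSpace G] [T2Space G] [TotallyDisconnectedSpace G]
    (d : G → G → ℝ) (hd : IsAdaptedMetric G d) :
    (∀ H : Subgroup G, IsCompact (H : Set G) → IsOpen (H : Set G) →
      asDim d = asDim (quotientDist H d)) ∧
    ((∀ H : Subgroup G, IsOpen (H : Set G) → asDim (quotientDist H d) < ⊤) →
      asDim d < ⊤) ∧
    (asDim d < ⊤ →
      ∃ H : Subgroup G, IsOpen (H : Set G) ∧ asDim (quotientDist H d) < ⊤) := by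
  obtain ⟨H₀, hH₀c, hH₀o⟩ := exists_isCompact_isOpen_subgroup G
  have hH₀ := hd.asDim_eq_asDim_quotientDist hH₀c
  exact ⟨fun H hc _ => hd.asDim_eq_asDim_quotientDist hc,
    fun hall => hH₀ ▸ hall H₀ hH₀o, fun hfin => ⟨H₀, hH₀o, hH₀ ▸ hfin⟩⟩

/-- Let `G` be a totally disconnected, locally compact, second
countable, compactly generated group with an adapted metric `d`.  If `H` is a compact
open subgroup then `asdim(G) = asdim(G/H)` for the quotient metric.  Consequently,
(a) if every discrete quotient `G/H` (with `H` open) has finite asymptotic dimension,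
then `asdim(G) < ∞`; and (b) if `asdim(G) < ∞` then `G` has a discrete quotient of
finite asymptotic dimension. -/
theorem asDim_tdlcsc
    (G : Type*) [Group G] [TopologicalSpace G] [IsTopologicalGroup G]
    [LocallyCompactSpace G] [T2Space G] [TotallyDisconnectedSpace G]
    [SecondCountableTopology G]
    (hcg : ∃ K : Set G, IsCompact K ∧ Subgroup.closure K = ⊤)
    (d : G → G → ℝ) (hd : IsAdaptedMetric G d) :
    (∀ H : Subgroup G, IsCompact (H : Set G) → IsOpen (H : Set G) →
      asDim d = asDim (quotientDist H d)) ∧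
    ((∀ H : Subgroup G, IsOpen (H : Set G) → asDim (quotientDist H d) < ⊤) →
      asDim d < ⊤) ∧
    (asDim d < ⊤ →
      ∃ H : Subgroup G, IsOpen (H : Set G) ∧ asDim (quotientDist H d) < ⊤) :=
  asDim_tdlcsc_general G d hd
end
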